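/- Let bV, bF : ℤ × ℤ → EuclideanSpace ℝ (Fin 3) be a binet such that for every face p ∈ ℤ × ℤ there exists R(p) ∈ ℝ with ‖bV(q) − bF(p)‖² = R(p) for each of the four corners q ∈ {p, p+(1,0), p+(0,1), p+(1,1)} (i.e. the face point bF(p) is equidistant from the four corner points, as holds for a circular-conical binet, where bF(p) lies on the axis of the circle through the corners). Then the functions ρV(v) = ‖bV(v)‖²/2 and ρF(p) = (‖bF(p)‖² − R(p))/2 satisfy ⟪bV(v), bF(f)⟫ = ρV(v) + ρF(f) for every incident vertex–face pair (v, f); consequently (bV, bF) is an orthogonal binet and admits a Möbius lift whose vertex lift vectors L(v) = (bV(v)₀, bV(v)₁, bV(v)₂, ρV(v) − 1/2, ρV(v) + 1/2) are null: Q_M(L(v), L(v)) = 0, i.e. they lie on the Möbius quadric. -/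
import Mathlib


open scoped InnerProductSpace

/-- A vertex `v` is incident to the face labeled `f` if `v` is one of its four corners. -/
def Incident (v f : ℤ × ℤ) : Prop :=
  v = f ∨ v = f + (1, 0) ∨ v = f + (0, 1) ∨ v = f + (1, 1)

/-- The Möbius form of signature `(++++-)` on `ℝ⁵`. -/
def QM (x y : Fin 5 → ℝ) : ℝ :=
  x 0 * y 0 + x 1 * y 1 + x 2 * y 2 + x 3 * y 3 - x 4 * y 4

/-- The vertex function `ρV(v) = ‖bV v‖²/2` (spheres of radius zero at the vertices). -/
noncomputable def rhoV (bV : ℤ × ℤ → EuclideanSpace ℝ (Fin 3)) (v : ℤ × ℤ) : ℝ :=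
  ‖bV v‖ ^ 2 / 2

/-- The face function `ρF(p) = (‖bF p‖² - R(p))/2` (spheres through the circle of the face). -/
noncomputable def rhoF (bF : ℤ × ℤ → EuclideanSpace ℝ (Fin 3)) (R : ℤ × ℤ → ℝ)
    (p : ℤ × ℤ) : ℝ :=
  (‖bF p‖ ^ 2 - R p) / 2

/-- The vertex Möbius lift vectors
`L(v) = (bV(v)₀, bV(v)₁, bV(v)₂, ρV(v) - 1/2, ρV(v) + 1/2)`. -/
noncomputable def vertexLift (bV : ℤ × ℤ → EuclideanSpace ℝ (Fin 3)) (v : ℤ × ℤ) :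
    Fin 5 → ℝ :=
  ![bV v 0, bV v 1, bV v 2, rhoV bV v - 1 / 2, rhoV bV v + 1 / 2]

/-- For a binet whose face points are equidistant (with squared distance `R p`) from the four
corner points — as for a circular-conical binet — the functions `ρV, ρF` give a Möbius lift:
the polarity relation holds on incident pairs, the binet is orthogonal, and the vertex lift
vectors are null, i.e. lie on the Möbius quadric. -/
theorem stmt_17 (bV bF : ℤ × ℤ → EuclideanSpace ℝ (Fin 3)) (R : ℤ × ℤ → ℝ)
    (hR : ∀ p q : ℤ × ℤ, Incident q p → ‖bV q - bF p‖ ^ 2 = R p) :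
    (∀ v f : ℤ × ℤ, Incident v f → ⟪bV v, bF f⟫_ℝ = rhoV bV v + rhoF bF R f) ∧
    (∀ v : ℤ × ℤ,
      ⟪bV (v + (1, 0)) - bV v, bF v - bF (v - (0, 1))⟫_ℝ = 0 ∧
      ⟪bV (v + (0, 1)) - bV v, bF v - bF (v - (1, 0))⟫_ℝ = 0) ∧
    (∀ v : ℤ × ℤ, QM (vertexLift bV v) (vertexLift bV v) = 0) := by
  have key : ∀ v f : ℤ × ℤ, Incident v f → ⟪bV v, bF f⟫_ℝ = rhoV bV v + rhoF bF R f := by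
    intro v f hvf
    have h := hR f v hvf
    have expand : ‖bV v - bF f‖ ^ 2 = ‖bV v‖ ^ 2 - 2 * ⟪bV v, bF f⟫_ℝ + ‖bF f‖ ^ 2 := by
      rw [norm_sub_sq_real]
    rw [expand] at h
    unfold rhoV rhoF
    linarith
  refine ⟨key, ?_, ?_⟩
  · intro v
    have i1 : Incident v v := Or.inl rfl
    have i2 : Incident (v + (1, 0)) v := Or.inr (Or.inl rfl)
    have i3 : Incident (v + (0, 1)) v := Or.inr (Or.inr (Or.inl rfl))
    have i4 : Incident v (v - (0, 1)) := Or.inr (Or.inr (Or.inl (by simp [Prod.ext_iff])))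
    have i5 : Incident (v + (1, 0)) (v - (0, 1)) := Or.inr (Or.inr (Or.inr (by simp [Prod.ext_iff])))
    have i6 : Incident v (v - (1, 0)) := Or.inr (Or.inl (by simp [Prod.ext_iff]))
    have i7 : Incident (v + (0, 1)) (v - (1, 0)) := Or.inr (Or.inr (Or.inr (by simp [Prod.ext_iff])))
    constructor
    · have e1 := key (v + (1, 0)) v i2
      have e2 := key v v i1
      have e3 := key (v + (1, 0)) (v - (0, 1)) i5
      have e4 := key v (v - (0, 1)) i4
      simp only [inner_sub_left, inner_sub_right]
      rw [e1, e2, e3, e4]; ring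
    · have e1 := key (v + (0, 1)) v i3
      have e2 := key v v i1
      have e3 := key (v + (0, 1)) (v - (1, 0)) i7
      have e4 := key v (v - (1, 0)) i6
      simp only [inner_sub_left, inner_sub_right]
      rw [e1, e2, e3, e4]; ring
  · intro v
    have hn : ‖bV v‖ ^ 2 = bV v 0 * bV v 0 + bV v 1 * bV v 1 + bV v 2 * bV v 2 := by
      rw [EuclideanSpace.norm_eq, Real.sq_sqrt (by positivity)]
      simp [Fin.sum_univ_three, sq]
    show bV v 0 * bV v 0 + bV v 1 * bV v 1 + bV v 2 * bV v 2 +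
        (‖bV v‖ ^ 2 / 2 - 1 / 2) * (‖bV v‖ ^ 2 / 2 - 1 / 2) -
        (‖bV v‖ ^ 2 / 2 + 1 / 2) * (‖bV v‖ ^ 2 / 2 + 1 / 2) = 0
    linear_combination -hn
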